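/- arXiv:1709.05235 — 2 statements merged into one kernel-verified Lean document; each statement's English description precedes it below -/
import Mathlib

section
/- Let a > 0, b > 0, A ≤ 0, B ∈ ℝ and h > 0, and define the probabilistic mean path loss L(h, r) = A / (1 + a·exp(−b·((180/π)·arctan(h/r) − a))) + 10·log₁₀(h² + r²) + B. Then the function r ↦ L(h, r) is strictly increasing on (0, ∞). -/
/-!
The path loss is the sum of a free-space term `10 log₁₀ (h² + r²)`, strictly increasing in `r`,
and the LoS correction `A / (1 + a exp(-b(θ - a)))` of the elevation angle `θ = (180/π) arctan (h/r)`.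
As `r` grows, `θ` decreases, so the denominator grows, and since `A ≤ 0` the correction increases.
-/

open Real Set

lemma antitoneOn_arctan_div {h : ℝ} (hh : 0 ≤ h) :
    AntitoneOn (fun r : ℝ => arctan (h / r)) (Ioi 0) :=
  fun _ hx _ _ hxy => arctan_strictMono.monotone (div_le_div_of_nonneg_left hh hx hxy)

lemma antitone_div_one_add_mul_exp {A a b k : ℝ} (hA : A ≤ 0) (ha : 0 ≤ a) (hb : 0 ≤ b)
    (hk : 0 ≤ k) : Antitone fun θ : ℝ => A / (1 + a * exp (-b * (k * θ - a))) := by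
  intro θ θ' hθθ'
  have hexp : exp (-b * (k * θ' - a)) ≤ exp (-b * (k * θ - a)) := by
    rw [neg_mul, neg_mul, exp_le_exp, neg_le_neg_iff]
    gcongr
  rw [div_le_div_iff₀ (by positivity) (by positivity)]
  exact mul_le_mul_of_nonpos_left (by gcongr) hA

lemma strictMonoOn_mul_logb_sq_add_sq {k c : ℝ} (hk : 0 < k) (hc : 1 < c) (h : ℝ) :
    StrictMonoOn (fun r : ℝ => k * logb c (h ^ 2 + r ^ 2)) (Ioi 0) := by
  intro x (hx : 0 < x) y _ hxy
  have hlog : logb c (h ^ 2 + x ^ 2) < logb c (h ^ 2 + y ^ 2) :=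
    logb_lt_logb hc (by positivity) (by gcongr)
  exact mul_lt_mul_of_pos_left hlog hk

/-- The probabilistic mean path loss is strictly increasing in the horizontal distance. -/
theorem stmt_2 (a b A B h : ℝ) (ha : 0 < a) (hb : 0 < b) (hA : A ≤ 0) (hh : 0 < h) :
    StrictMonoOn (fun r : ℝ =>
      A / (1 + a * Real.exp (-b * ((180 / Real.pi) * Real.arctan (h / r) - a)))
        + 10 * Real.logb 10 (h ^ 2 + r ^ 2) + B) (Set.Ioi (0 : ℝ)) := by
  have hLoS : MonotoneOn
      (fun r : ℝ => A / (1 + a * exp (-b * ((180 / π) * arctan (h / r) - a)))) (Ioi 0) :=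
    (antitone_div_one_add_mul_exp hA ha.le hb.le (by positivity)).comp_antitoneOn
      (antitoneOn_arctan_div hh.le)
  have hFree := strictMonoOn_mul_logb_sq_add_sq (k := 10) (c := 10) (by norm_num) (by norm_num) h
  exact (hLoS.add_strictMono hFree).add_const B
end

section
/- Let a > 0, b > 0, A ≤ 0, B ∈ ℝ and h > 0, and define L(h, r) = A / (1 + a·exp(−b·((180/π)·arctan(h/r) − a))) + 10·log₁₀(h² + r²) + B. For every threshold T with T > A / (1 + a·exp(−b·(90 − a))) + 10·log₁₀(h²) + B, there exists a unique R > 0 such that L(h, R) = T. -/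
/-!
As `r` grows the elevation angle `(180/π)·arctan(h/r)` decreases, so the nonpositive
line-of-sight term `A / (1 + a·exp(-b(θ - a)))` increases, while `10·log₁₀(h² + r²)`
increases strictly. Hence `L(h, ·)` is continuous and strictly increasing on `(0, ∞)`; it tends
to the stated bound as `r → 0⁺` and to `+∞` as `r → ∞`, so by the intermediate value theorem
it takes every larger value exactly once.
-/

open Real Filter Set Topology

theorem StrictMonoOn.existsUnique_eq_of_tendsto {α δ : Type*} [ConditionallyCompleteLinearOrder α]
    [TopologicalSpace α] [OrderTopology α] [DenselyOrdered α] [NoMaxOrder α]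
    [LinearOrder δ] [TopologicalSpace δ] [OrderClosedTopology δ]
    {f : α → δ} {a : α} {l t : δ} (hmono : StrictMonoOn f (Ioi a))
    (hcont : ContinuousOn f (Ioi a)) (hbot : Tendsto f (𝓝[>] a) (𝓝 l))
    (htop : Tendsto f atTop atTop) (ht : l < t) :
    ∃! x, a < x ∧ f x = t := by
  obtain ⟨x₁, hx₁t, hx₁⟩ :=
    ((hbot.eventually (eventually_lt_nhds ht)).and self_mem_nhdsWithin).exists
  obtain ⟨x₂, hx₂t, hx₂⟩ :=
    ((htop.eventually_ge_atTop t).and (eventually_gt_atTop a)).exists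
  obtain ⟨x, hx, rfl⟩ := hcont.surjOn_Icc hx₁ hx₂ ⟨hx₁t.le, hx₂t⟩
  exact ⟨x, ⟨hx, rfl⟩, fun y ⟨hy, hyx⟩ => hmono.injOn hy hx hyx⟩

noncomputable def elevationDeg (h r : ℝ) : ℝ := (180 / π) * arctan (h / r)

noncomputable def excessLoss (a b A θ : ℝ) : ℝ := A / (1 + a * exp (-b * (θ - a)))

noncomputable def pathLoss (a b A B h r : ℝ) : ℝ :=
  excessLoss a b A (elevationDeg h r) + 10 * logb 10 (h ^ 2 + r ^ 2) + B

section excessLoss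

variable {a b A : ℝ}

lemma one_le_excessLoss_denom (ha : 0 ≤ a) (b θ : ℝ) : 1 ≤ 1 + a * exp (-b * (θ - a)) :=
  le_add_of_nonneg_right (by positivity)

lemma excessLoss_antitone (ha : 0 ≤ a) (hb : 0 ≤ b) (hA : A ≤ 0) :
    Antitone (excessLoss a b A) := by
  intro θ₁ θ₂ hθ
  have hexp : exp (-b * (θ₂ - a)) ≤ exp (-b * (θ₁ - a)) :=
    exp_le_exp.2 (by nlinarith)
  simp only [excessLoss, div_eq_mul_inv]
  exact mul_le_mul_of_nonpos_left
    (inv_anti₀ (by linarith [one_le_excessLoss_denom ha b θ₂]) (by gcongr)) hA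

lemma le_excessLoss (ha : 0 ≤ a) (hA : A ≤ 0) (θ : ℝ) : A ≤ excessLoss a b A θ :=
  have hD := one_le_excessLoss_denom ha b θ
  (le_div_iff₀ (by linarith)).2 (by nlinarith)

lemma continuous_excessLoss (ha : 0 ≤ a) : Continuous (excessLoss a b A) :=
  continuous_const.div (by fun_prop) fun θ => by linarith [one_le_excessLoss_denom ha b θ]

end excessLoss

section elevationDeg

variable {h : ℝ}

lemma elevationDeg_antitoneOn (hh : 0 ≤ h) : AntitoneOn (elevationDeg h) (Ioi 0) := by
  intro r₁ hr₁ r₂ _ hr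
  unfold elevationDeg
  gcongr

lemma continuousOn_elevationDeg : ContinuousOn (elevationDeg h) (Ioi 0) := by
  have : ContinuousOn (fun r => h / r) (Ioi 0) :=
    continuousOn_const.div continuousOn_id fun r hr => ne_of_gt hr
  exact continuousOn_const.mul (continuous_arctan.comp_continuousOn this)

lemma tendsto_elevationDeg_nhdsGT_zero (hh : 0 < h) :
    Tendsto (elevationDeg h) (𝓝[>] 0) (𝓝 90) := by
  have : Tendsto (fun r => h / r) (𝓝[>] 0) atTop :=
    tendsto_inv_nhdsGT_zero.const_mul_atTop hh
  have h90 : (180 / π) * (π / 2) = 90 := by field_simp; norm_num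
  rw [← h90]
  exact ((tendsto_nhds_of_tendsto_nhdsWithin tendsto_arctan_atTop).comp this).const_mul _

end elevationDeg

section pathLoss

variable {a b A B h : ℝ}

lemma pathLoss_strictMonoOn (ha : 0 ≤ a) (hb : 0 ≤ b) (hA : A ≤ 0) (hh : 0 ≤ h) :
    StrictMonoOn (pathLoss a b A B h) (Ioi 0) := by
  intro r₁ (hr₁ : 0 < r₁) r₂ (hr₂ : 0 < r₂) hr
  have hexcess : excessLoss a b A (elevationDeg h r₁) ≤ excessLoss a b A (elevationDeg h r₂) :=
    excessLoss_antitone ha hb hA (elevationDeg_antitoneOn hh hr₁ hr₂ hr.le)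
  have hlog : logb 10 (h ^ 2 + r₁ ^ 2) < logb 10 (h ^ 2 + r₂ ^ 2) := by
    have := pow_lt_pow_left₀ hr hr₁.le two_ne_zero
    exact logb_lt_logb (by norm_num) (by positivity) (by linarith)
  unfold pathLoss
  linarith

lemma continuousOn_pathLoss (ha : 0 ≤ a) : ContinuousOn (pathLoss a b A B h) (Ioi 0) := by
  have hlog : ContinuousOn (fun r : ℝ => logb 10 (h ^ 2 + r ^ 2)) (Ioi 0) :=
    (continuousOn_const.add (continuousOn_pow 2)).logb fun r (hr : 0 < r) =>
      (by positivity : h ^ 2 + r ^ 2 ≠ 0)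
  exact (((continuous_excessLoss ha).comp_continuousOn continuousOn_elevationDeg).add
    (continuousOn_const.mul hlog)).add continuousOn_const

lemma tendsto_pathLoss_nhdsGT_zero (ha : 0 ≤ a) (hh : 0 < h) :
    Tendsto (pathLoss a b A B h) (𝓝[>] 0)
      (𝓝 (excessLoss a b A 90 + 10 * logb 10 (h ^ 2) + B)) := by
  have hlog :
      Tendsto (fun r : ℝ => logb 10 (h ^ 2 + r ^ 2)) (𝓝[>] 0) (𝓝 (logb 10 (h ^ 2))) := by
    have : ContinuousAt (fun r : ℝ => logb 10 (h ^ 2 + r ^ 2)) 0 :=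
      (continuousAt_const.add (continuousAt_id.pow 2)).logb
        (by positivity : h ^ 2 + (0 : ℝ) ^ 2 ≠ 0)
    simpa using this.tendsto.mono_left nhdsWithin_le_nhds
  exact ((((continuous_excessLoss ha).tendsto 90).comp
    (tendsto_elevationDeg_nhdsGT_zero hh)).add (hlog.const_mul 10)).add_const B

lemma tendsto_pathLoss_atTop (ha : 0 ≤ a) (hA : A ≤ 0) :
    Tendsto (pathLoss a b A B h) atTop atTop := by
  have hlog : Tendsto (fun r : ℝ => A + 10 * logb 10 (h ^ 2 + r ^ 2) + B) atTop atTop := by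
    refine tendsto_atTop_add_const_right _ B (tendsto_atTop_add_const_left _ A ?_)
    refine (tendsto_logb_atTop (by norm_num)).comp ?_ |>.const_mul_atTop (by norm_num)
    exact tendsto_atTop_add_const_left _ _ (tendsto_pow_atTop two_ne_zero)
  refine tendsto_atTop_mono (fun r => ?_) hlog
  have := le_excessLoss (b := b) ha hA (elevationDeg h r)
  unfold pathLoss
  linarith

end pathLoss

/-- Existence and uniqueness of the coverage radius for any threshold above the
limiting path loss directly below the UAV. -/
theorem stmt_3 (a b A B h : ℝ) (ha : 0 < a) (hb : 0 < b) (hA : A ≤ 0) (hh : 0 < h)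
    (T : ℝ)
    (hT : T > A / (1 + a * Real.exp (-b * (90 - a))) + 10 * Real.logb 10 (h ^ 2) + B) :
    ∃! R : ℝ, 0 < R ∧
      A / (1 + a * Real.exp (-b * ((180 / Real.pi) * Real.arctan (h / R) - a)))
        + 10 * Real.logb 10 (h ^ 2 + R ^ 2) + B = T :=
  (pathLoss_strictMonoOn ha.le hb.le hA hh.le).existsUnique_eq_of_tendsto
    (continuousOn_pathLoss ha.le) (tendsto_pathLoss_nhdsGT_zero ha.le hh)
    (tendsto_pathLoss_atTop ha.le hA) hT
end
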